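/- In G_n = P_n □ C_4, the identity R_{G_n}[(a_1,b_1),(a_n,b_3)] = R_{L_n}[(a_1,c_1),(a_n,c_2)] + (1/4)·R_{C^4_{P_n}}[a_1,a_n] − (n−1)/4 holds, where L_n = P_n □ K_2 is the ladder graph and C^4_{P_n} is the weighted fan graph with apex conductance 4. -/

import Mathlib

open Matrix Finset

open Classical in
/-- The Moore–Penrose pseudoinverse of a real square matrix, defined via the
four Penrose conditions (it is unique when it exists). -/
noncomputable def Matrix.mpinv {m : Type*} [Fintype m] [DecidableEq m]
    (A : Matrix m m ℝ) : Matrix m m ℝ :=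
  if h : ∃ B : Matrix m m ℝ,
      A * B * A = A ∧ B * A * B = B ∧ (A * B)ᵀ = A * B ∧ (B * A)ᵀ = B * A
  then h.choose else 0

/-- Effective resistance between `u` and `v` with respect to a (weighted)
Laplacian matrix `L`:  `(e_u - e_v)ᵀ L⁺ (e_u - e_v)`. -/
noncomputable def effRes {m : Type*} [Fintype m] [DecidableEq m]
    (L : Matrix m m ℝ) (u v : m) : ℝ :=
  (Pi.single u 1 - Pi.single v 1) ⬝ᵥ (L.mpinv *ᵥ (Pi.single u 1 - Pi.single v 1))

/-- The (real) Laplacian matrix of a simple graph. -/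
noncomputable def lapm {V : Type*} [Fintype V] [DecidableEq V]
    (G : SimpleGraph V) : Matrix V V ℝ :=
  letI := Classical.decRel G.Adj
  G.lapMatrix ℝ

/-- Resistance distance between two vertices of a simple graph. -/
noncomputable def resDist {V : Type*} [Fintype V] [DecidableEq V]
    (G : SimpleGraph V) (u v : V) : ℝ :=
  effRes (lapm G) u v

/-- Resistance diameter of a simple graph. -/
noncomputable def resDiam {V : Type*} [Fintype V] [DecidableEq V]
    (G : SimpleGraph V) : ℝ :=
  ⨆ p : V × V, resDist G p.1 p.2

/-- The weighted Laplacian of the cone over `G` with apex `Sum.inr ()`: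
edges of `G` have conductance `1` (unit resistance), and each vertex of `G`
is joined to the apex by an edge of conductance `m` (resistance `1/m`). -/
noncomputable def coneLap {V : Type*} [Fintype V] [DecidableEq V]
    (G : SimpleGraph V) (m : ℝ) : Matrix (V ⊕ Unit) (V ⊕ Unit) ℝ :=
  letI := Classical.decRel G.Adj
  let W : Matrix (V ⊕ Unit) (V ⊕ Unit) ℝ := fun i j =>
    match i, j with
    | Sum.inl a, Sum.inl b => if G.Adj a b then 1 else 0
    | Sum.inl _, Sum.inr _ => m
    | Sum.inr _, Sum.inl _ => m
    | Sum.inr _, Sum.inr _ => 0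
  Matrix.of fun i j => (if i = j then ∑ k, W i k else 0) - W i j

/-- The `k`-dimensional hypercube graph `Q_k`. -/
def hypercube (k : ℕ) : SimpleGraph (Fin k → Bool) where
  Adj x y := (Finset.univ.filter fun i => x i ≠ y i).card = 1
  symm := by
    constructor
    intro x y h
    rw [← h]
    congr 1
    ext i
    simp [ne_comm]
  loopless := by constructor; intro x; simp

/-- The join `G + H` of two graphs on disjoint vertex sets. -/
def graphJoin {V W : Type*} (G : SimpleGraph V) (H : SimpleGraph W) :
    SimpleGraph (V ⊕ W) where
  Adj x y :=
    match x, y with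
    | Sum.inl a, Sum.inl b => G.Adj a b
    | Sum.inr a, Sum.inr b => H.Adj a b
    | Sum.inl _, Sum.inr _ => True
    | Sum.inr _, Sum.inl _ => True
  symm := by
    constructor
    rintro (a | a) (b | b) h
    · exact G.adj_symm h
    · trivial
    · trivial
    · exact H.adj_symm h
  loopless := by
    constructor
    rintro (a | a) h
    · exact G.irrefl h
    · exact H.irrefl h

/-!
On a box product the Laplacian separates variables,
`L_{G □ H} (f ⊗ g) = (L_G f) ⊗ g + f ⊗ (L_H g)`, so `L_{G □ H} (f ⊗ g) = ((L_G + μ) f) ⊗ g`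
whenever `L_H g = μ g`. On `C₄` the unit vectors at `0` and `2` are `(𝟙 ± 2c + s) / 4`, where
`c = (1, 0, -1, 0)` and `s = (1, -1, 1, -1)` have eigenvalues `2` and `4`; on `K₂` they are
`(𝟙 ± d) / 2`, where `d = (1, -1)` has eigenvalue `2`. So if `L x₀ = e_a - e_b`,
`(L + 2) x₂ = e_a + e_b` and `(L + 4) x₄ = e_a - e_b`, then
`R_{G□C₄} = R_G / 4 + (x₂ a + x₂ b) / 2 + (x₄ a - x₄ b) / 4` and
`R_{G□K₂} = R_G / 2 + (x₂ a + x₂ b) / 2`. Moreover `x₄` sums to `0`, so extended by `0` at the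
apex it is a potential of the cone with apex conductance `4`, whose resistance is `x₄ a - x₄ b`.
For `G = P_n` the potential `i ↦ -i` gives `R_G = n - 1`.
-/

section Pseudoinverse

variable {m : Type*} [Fintype m] [DecidableEq m]

theorem Matrix.IsHermitian.exists_penrose {A : Matrix m m ℝ} (hA : A.IsHermitian) :
    ∃ B : Matrix m m ℝ,
      A * B * A = A ∧ B * A * B = B ∧ (A * B)ᵀ = A * B ∧ (B * A)ᵀ = B * A := by
  have hA' : IsSelfAdjoint A := hA
  have hcont : ∀ f : ℝ → ℝ, ContinuousOn f (spectrum ℝ A) := fun f =>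
    (Set.toFinite _).continuousOn f
  have hmul : ∀ f g : ℝ → ℝ, cfc f A * cfc g A = cfc (fun x => f x * g x) A := fun f g =>
    (cfc_mul f g A (hcont f) (hcont g)).symm
  have hL : ∀ f : ℝ → ℝ, A * cfc f A = cfc (fun x => x * f x) A := fun f => by
    rw [← hmul, cfc_id' ℝ A]
  have hR : ∀ f : ℝ → ℝ, cfc f A * A = cfc (fun x => f x * x) A := fun f => by
    rw [← hmul, cfc_id' ℝ A]
  have hsym : ∀ f : ℝ → ℝ, (cfc f A)ᵀ = cfc f A := fun f => by
    rw [← conjTranspose_eq_transpose_of_trivial]; exact cfc_predicate f A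
  -- `B = A⁻¹` in the functional calculus; `0⁻¹ = 0` makes `x * x⁻¹ * x = x` hold for every `x`.
  refine ⟨cfc (fun x : ℝ => x⁻¹) A, ?_, ?_, ?_, ?_⟩
  · rw [hL, hR]; simp only [mul_inv_mul_cancel]; exact cfc_id' ℝ A
  · rw [hR, hmul]; congr 1; funext x; simpa using mul_inv_mul_cancel x⁻¹
  · rw [hL, hsym]
  · rw [hR, hsym]

theorem effRes_eq_sub_of_mulVec_eq {L : Matrix m m ℝ} (hL : L.IsSymm) {u v : m}
    {x : m → ℝ} (hx : L *ᵥ x = Pi.single u 1 - Pi.single v 1) :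
    effRes L u v = x u - x v := by
  have hL' : L.IsHermitian := (conjTranspose_eq_transpose_of_trivial L).trans hL
  obtain ⟨hLBL, -⟩ := hL'.exists_penrose.choose_spec
  rw [effRes, Matrix.mpinv, dif_pos hL'.exists_penrose, ← hx]
  calc (L *ᵥ x) ⬝ᵥ (hL'.exists_penrose.choose *ᵥ (L *ᵥ x))
      = x ⬝ᵥ ((L * hL'.exists_penrose.choose * L) *ᵥ x) := by
        rw [← mulVec_mulVec, ← mulVec_mulVec, dotProduct_mulVec x, ← mulVec_transpose, hL]
    _ = x u - x v := by
        rw [hLBL, hx, dotProduct_sub, dotProduct_single_one, dotProduct_single_one]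

end Pseudoinverse

open SimpleGraph

section Laplacian

variable {V : Type*} [Fintype V] [DecidableEq V] (G : SimpleGraph V)

theorem lapm_eq_lapMatrix [DecidableRel G.Adj] : lapm G = G.lapMatrix ℝ := by
  unfold lapm; congr

theorem lapm_isSymm : (lapm G).IsSymm := by
  classical
  rw [lapm_eq_lapMatrix]; exact G.isSymm_lapMatrix (R := ℝ)

theorem lapm_mulVec_apply [DecidableRel G.Adj] (x : V → ℝ) (i : V) :
    (lapm G *ᵥ x) i = ∑ j ∈ G.neighborFinset i, (x i - x j) := by
  rw [lapm_eq_lapMatrix, lapMatrix_mulVec_apply, sum_sub_distrib, sum_const,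
    card_neighborFinset_eq_degree, nsmul_eq_mul]

theorem lapm_mulVec_const (c : ℝ) : lapm G *ᵥ (fun _ => c) = 0 := by
  classical
  have hc : (fun _ => c : V → ℝ) = c • fun _ => 1 := by funext; simp
  rw [hc, mulVec_smul, lapm_eq_lapMatrix, lapMatrix_mulVec_const_eq_zero, smul_zero]

theorem sum_lapm_mulVec (x : V → ℝ) : ∑ i, (lapm G *ᵥ x) i = 0 := by
  rw [← one_dotProduct, dotProduct_mulVec, ← mulVec_transpose, lapm_isSymm G, Pi.one_def,
    lapm_mulVec_const, zero_dotProduct]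

theorem exists_lapm_mulVec_add_smul_eq {c : ℝ} (hc : 0 < c) (w : V → ℝ) :
    ∃ x, lapm G *ᵥ x + c • x = w := by
  classical
  have hM : (lapm G + c • 1).PosDef := by
    rw [lapm_eq_lapMatrix]
    exact PosDef.posSemidef_add (G.posSemidef_lapMatrix ℝ) (PosDef.one.smul hc)
  refine ⟨(lapm G + c • 1)⁻¹ *ᵥ w, ?_⟩
  calc lapm G *ᵥ (lapm G + c • 1)⁻¹ *ᵥ w + c • (lapm G + c • 1)⁻¹ *ᵥ w
      = (lapm G + c • 1) *ᵥ (lapm G + c • 1)⁻¹ *ᵥ w := by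
        rw [add_mulVec, smul_mulVec, one_mulVec]
    _ = w := by
        rw [mulVec_mulVec, mul_nonsing_inv _ ((isUnit_iff_isUnit_det _).mp hM.isUnit),
          one_mulVec]

end Laplacian

section BoxProduct

variable {α β : Type*} [Fintype α] [DecidableEq α] [Fintype β] [DecidableEq β]
  (G : SimpleGraph α) (H : SimpleGraph β)

theorem lapm_boxProd_mulVec_apply (x : α × β → ℝ) (i : α) (k : β) :
    (lapm (G □ H) *ᵥ x) (i, k)
      = (lapm G *ᵥ fun j => x (j, k)) i + (lapm H *ᵥ fun l => x (i, l)) k := by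
  classical
  rw [lapm_mulVec_apply, lapm_mulVec_apply, lapm_mulVec_apply, neighborFinset_boxProd,
    sum_disjUnion, sum_product, sum_product, sum_singleton, sum_comm, sum_singleton]

theorem lapm_boxProd_mulVec_of_mulVec_eq_smul {g : β → ℝ} {μ : ℝ} (hg : lapm H *ᵥ g = μ • g)
    (f : α → ℝ) :
    lapm (G □ H) *ᵥ (fun p => f p.1 * g p.2) = fun p => (lapm G *ᵥ f + μ • f) p.1 * g p.2 := by
  funext ⟨i, k⟩
  have hcol : (fun j => f j * g k) = g k • f := by funext; simp [mul_comm]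
  have hrow : (fun l => f i * g l) = f i • g := rfl
  rw [lapm_boxProd_mulVec_apply, hcol, hrow, mulVec_smul, mulVec_smul, hg]
  simp only [Pi.add_apply, Pi.smul_apply, smul_eq_mul]
  ring

end BoxProduct

theorem lapm_cycleGraph_four_mulVec_alternating :
    lapm (cycleGraph 4) *ᵥ ![1, -1, 1, -1] = (4 : ℝ) • ![1, -1, 1, -1] := by
  funext k
  rw [lapm_mulVec_apply, neighborFinset_eq_filter, sum_filter, Fin.sum_univ_four]
  fin_cases k <;> simp +decide <;> norm_num

theorem lapm_cycleGraph_four_mulVec_cosine :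
    lapm (cycleGraph 4) *ᵥ ![1, 0, -1, 0] = (2 : ℝ) • ![1, 0, -1, 0] := by
  funext k
  rw [lapm_mulVec_apply, neighborFinset_eq_filter, sum_filter, Fin.sum_univ_four]
  fin_cases k <;> simp +decide <;> norm_num

theorem lapm_pathGraph_two_mulVec_alternating :
    lapm (pathGraph 2) *ᵥ ![1, -1] = (2 : ℝ) • ![1, -1] := by
  classical
  funext k
  rw [lapm_mulVec_apply, neighborFinset_eq_filter, sum_filter, Fin.sum_univ_two]
  fin_cases k <;> norm_num [pathGraph_adj]

section Cone

variable {V : Type*} [Fintype V] [DecidableEq V] (G : SimpleGraph V) (m : ℝ)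

theorem coneLap_eq_fromBlocks :
    coneLap G m = fromBlocks (lapm G + m • 1) (of fun _ _ => -m) (of fun _ _ => -m)
      (of fun _ _ => Fintype.card V * m) := by
  classical
  ext (i | i) (j | j)
  · simp only [coneLap, lapm_eq_lapMatrix, lapMatrix, degMatrix, of_apply, fromBlocks_apply₁₁,
      Matrix.add_apply, Matrix.sub_apply, Matrix.smul_apply, one_apply, diagonal_apply,
      Fintype.sum_sum_type, ← card_neighborFinset_eq_degree, neighborFinset_eq_filter,
      adjMatrix_apply, Sum.inl.injEq]
    rcases eq_or_ne i j with rfl | hij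
    · simp [sum_boole]
    · simp [hij]
  · simp [coneLap]
  · simp [coneLap]
  · simp [coneLap, Fintype.sum_sum_type]

theorem coneLap_isSymm : (coneLap G m).IsSymm := by
  rw [coneLap_eq_fromBlocks]
  exact IsSymm.fromBlocks ((lapm_isSymm G).add (isSymm_one.smul m)) rfl rfl

theorem coneLap_mulVec_sumElim_zero (x : V → ℝ) :
    coneLap G m *ᵥ Sum.elim x 0 = Sum.elim (lapm G *ᵥ x + m • x) fun _ => -m * ∑ i, x i := by
  rw [coneLap_eq_fromBlocks, fromBlocks_mulVec]
  simp only [Sum.elim_comp_inl, Sum.elim_comp_inr, add_mulVec, smul_mulVec, one_mulVec,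
    mulVec_zero, add_zero]
  congr 1
  funext
  simp [mulVec, dotProduct, mul_sum]

theorem effRes_coneLap_inl {m : ℝ} (hm : m ≠ 0) {a b : V} {x : V → ℝ}
    (hx : lapm G *ᵥ x + m • x = Pi.single a 1 - Pi.single b 1) :
    effRes (coneLap G m) (Sum.inl a) (Sum.inl b) = x a - x b := by
  have hsum : ∑ i, x i = 0 := by
    have := congrArg (fun v => ∑ i, v i) hx
    simpa [sum_add_distrib, sum_lapm_mulVec, ← mul_sum, hm] using this
  refine effRes_eq_sub_of_mulVec_eq (coneLap_isSymm G m) (x := Sum.elim x 0) ?_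
  rw [coneLap_mulVec_sumElim_zero, hx, hsum]
  ext (i | i) <;> simp [Pi.single_apply]

end Cone

theorem lapm_pathGraph_mulVec_neg_val {n : ℕ} (hn : 0 < n) :
    lapm (pathGraph n) *ᵥ (fun j => -(j : ℝ))
      = Pi.single ⟨0, hn⟩ 1 - Pi.single ⟨n - 1, by omega⟩ 1 := by
  classical
  funext i
  have hterm : ∀ j : Fin n, (if (pathGraph n).Adj i j then -(i : ℝ) - -(j : ℝ) else 0)
      = (if (j : ℕ) = i + 1 then 1 else 0) - (if (j : ℕ) + 1 = i then 1 else 0) := by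
    intro j
    simp only [pathGraph_adj]
    split_ifs <;> first
      | omega
      | (rw [‹(j : ℕ) = i + 1›]; push_cast; ring)
      | (rw [← ‹(j : ℕ) + 1 = i›]; push_cast; ring)
      | simp
  have hup : ∑ j : Fin n, (if (j : ℕ) = i + 1 then (1 : ℝ) else 0)
      = if (i : ℕ) + 1 < n then 1 else 0 := by
    rw [Fin.sum_univ_eq_sum_range (fun j => if j = (i : ℕ) + 1 then (1 : ℝ) else 0)]
    simp only [sum_ite_eq', mem_range]
  have hdown : ∑ j : Fin n, (if (j : ℕ) + 1 = i then (1 : ℝ) else 0)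
      = 1 - if 0 = (i : ℕ) then 1 else 0 := by
    rw [Fin.sum_univ_eq_sum_range (fun j => if j + 1 = (i : ℕ) then (1 : ℝ) else 0),
      eq_sub_iff_add_eq]
    rw [← sum_range_succ' (fun j => if j = (i : ℕ) then (1 : ℝ) else 0), sum_ite_eq',
      if_pos (mem_range.mpr (by omega))]
  rw [lapm_mulVec_apply, neighborFinset_eq_filter, sum_filter]
  simp only [hterm, sum_sub_distrib, hup, hdown, Pi.sub_apply, Pi.single_apply, Fin.ext_iff]
  split_ifs <;> first | omega | norm_num

theorem Pi.single_one_prodMk_apply {α β R : Type*} [DecidableEq α] [DecidableEq β]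
    [MulZeroOneClass R] (a : α) (b : β) (p : α × β) :
    (Pi.single (a, b) 1 : α × β → R) p
      = (Pi.single a 1 : α → R) p.1 * (Pi.single b 1 : β → R) p.2 := by
  obtain ⟨i, k⟩ := p
  simp only [Pi.single_apply, Prod.mk.injEq, ite_and]
  split_ifs <;> simp

section Decomposition

variable {α : Type*} [Fintype α] [DecidableEq α] (G : SimpleGraph α) {a b : α} {x₀ x₂ x₄ : α → ℝ}

theorem resDist_boxProd_cycleGraph_four
    (h₀ : lapm G *ᵥ x₀ = Pi.single a 1 - Pi.single b 1)
    (h₂ : lapm G *ᵥ x₂ + (2 : ℝ) • x₂ = Pi.single a 1 + Pi.single b 1)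
    (h₄ : lapm G *ᵥ x₄ + (4 : ℝ) • x₄ = Pi.single a 1 - Pi.single b 1) :
    resDist (G □ cycleGraph 4) (a, 0) (b, 2)
      = (x₀ a - x₀ b) / 4 + (x₂ a + x₂ b) / 2 + (x₄ a - x₄ b) / 4 := by
  set g₀ : Fin 4 → ℝ := fun _ => 1 / 4
  set g₂ : Fin 4 → ℝ := (1 / 2 : ℝ) • ![1, 0, -1, 0]
  set g₄ : Fin 4 → ℝ := (1 / 4 : ℝ) • ![1, -1, 1, -1]
  have e₀ := lapm_boxProd_mulVec_of_mulVec_eq_smul G (cycleGraph 4)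
    (by rw [zero_smul, lapm_mulVec_const] : lapm (cycleGraph 4) *ᵥ g₀ = (0 : ℝ) • g₀) x₀
  have e₂ := lapm_boxProd_mulVec_of_mulVec_eq_smul G (cycleGraph 4)
    (by rw [mulVec_smul, lapm_cycleGraph_four_mulVec_cosine, smul_comm] :
      lapm (cycleGraph 4) *ᵥ g₂ = (2 : ℝ) • g₂) x₂
  have e₄ := lapm_boxProd_mulVec_of_mulVec_eq_smul G (cycleGraph 4)
    (by rw [mulVec_smul, lapm_cycleGraph_four_mulVec_alternating, smul_comm] :
      lapm (cycleGraph 4) *ᵥ g₄ = (4 : ℝ) • g₄) x₄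
  have hu : lapm (G □ cycleGraph 4) *ᵥ
      ((fun p => x₀ p.1 * g₀ p.2) + (fun p => x₂ p.1 * g₂ p.2) + (fun p => x₄ p.1 * g₄ p.2))
      = Pi.single (a, 0) 1 - Pi.single (b, 2) 1 := by
    rw [mulVec_add, mulVec_add, e₀, e₂, e₄, zero_smul, add_zero, h₀, h₂, h₄]
    ext ⟨i, k⟩
    simp only [Pi.add_apply, Pi.sub_apply, Pi.single_one_prodMk_apply]
    fin_cases k <;> simp [g₀, g₂, g₄] <;> ring
  rw [resDist, effRes_eq_sub_of_mulVec_eq (lapm_isSymm _) hu]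
  simp [g₀, g₂, g₄]
  ring

theorem resDist_boxProd_pathGraph_two
    (h₀ : lapm G *ᵥ x₀ = Pi.single a 1 - Pi.single b 1)
    (h₂ : lapm G *ᵥ x₂ + (2 : ℝ) • x₂ = Pi.single a 1 + Pi.single b 1) :
    resDist (G □ pathGraph 2) (a, 0) (b, 1) = (x₀ a - x₀ b) / 2 + (x₂ a + x₂ b) / 2 := by
  set g₀ : Fin 2 → ℝ := fun _ => 1 / 2
  set g₁ : Fin 2 → ℝ := (1 / 2 : ℝ) • ![1, -1]
  have e₀ := lapm_boxProd_mulVec_of_mulVec_eq_smul G (pathGraph 2)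
    (by rw [zero_smul, lapm_mulVec_const] : lapm (pathGraph 2) *ᵥ g₀ = (0 : ℝ) • g₀) x₀
  have e₁ := lapm_boxProd_mulVec_of_mulVec_eq_smul G (pathGraph 2)
    (by rw [mulVec_smul, lapm_pathGraph_two_mulVec_alternating, smul_comm] :
      lapm (pathGraph 2) *ᵥ g₁ = (2 : ℝ) • g₁) x₂
  have hu : lapm (G □ pathGraph 2) *ᵥ ((fun p => x₀ p.1 * g₀ p.2) + (fun p => x₂ p.1 * g₁ p.2))
      = Pi.single (a, 0) 1 - Pi.single (b, 1) 1 := by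
    rw [mulVec_add, e₀, e₁, zero_smul, add_zero, h₀, h₂]
    ext ⟨i, k⟩
    simp only [Pi.add_apply, Pi.sub_apply, Pi.single_one_prodMk_apply]
    fin_cases k <;> simp [g₀, g₁] <;> ring
  rw [resDist, effRes_eq_sub_of_mulVec_eq (lapm_isSymm _) hu]
  simp [g₀, g₁]
  ring

theorem resDist_boxProd_cycleGraph_four_eq {x : α → ℝ}
    (hx : lapm G *ᵥ x = Pi.single a 1 - Pi.single b 1) :
    resDist (G □ cycleGraph 4) (a, 0) (b, 2)
      = resDist (G □ pathGraph 2) (a, 0) (b, 1)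
        + 1 / 4 * effRes (coneLap G 4) (Sum.inl a) (Sum.inl b) - resDist G a b / 4 := by
  obtain ⟨x₂, h₂⟩ := exists_lapm_mulVec_add_smul_eq G two_pos (Pi.single a 1 + Pi.single b 1)
  obtain ⟨x₄, h₄⟩ := exists_lapm_mulVec_add_smul_eq G four_pos (Pi.single a 1 - Pi.single b 1)
  rw [resDist_boxProd_cycleGraph_four G hx h₂ h₄, resDist_boxProd_pathGraph_two G hx h₂,
    effRes_coneLap_inl G four_ne_zero h₄, resDist, effRes_eq_sub_of_mulVec_eq (lapm_isSymm G) hx]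
  ring

end Decomposition

theorem resDist_pathGraph_zero_last {n : ℕ} (hn : 0 < n) :
    resDist (pathGraph n) ⟨0, hn⟩ ⟨n - 1, by omega⟩ = n - 1 := by
  rw [resDist, effRes_eq_sub_of_mulVec_eq (lapm_isSymm _) (lapm_pathGraph_mulVec_neg_val hn)]
  simp [Nat.cast_sub hn]

/-- Decomposition of the diagonal resistance distance of the block tower graph
`G_n = P_n □ C_4` via the ladder graph `L_n` and the weighted fan `C^4_{P_n}`. -/
theorem resDist_blockTower_decomposition (n : ℕ) (hn : 1 ≤ n) :
    resDist ((SimpleGraph.pathGraph n).boxProd (SimpleGraph.cycleGraph 4))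
        (⟨0, by omega⟩, 0) (⟨n - 1, by omega⟩, 2)
      = resDist ((SimpleGraph.pathGraph n).boxProd (SimpleGraph.pathGraph 2))
          (⟨0, by omega⟩, 0) (⟨n - 1, by omega⟩, 1)
        + (1 / 4) * effRes (coneLap (SimpleGraph.pathGraph n) 4)
            (Sum.inl ⟨0, by omega⟩) (Sum.inl ⟨n - 1, by omega⟩)
        - ((n : ℝ) - 1) / 4 := by
  rw [resDist_boxProd_cycleGraph_four_eq _ (lapm_pathGraph_mulVec_neg_val hn),
    resDist_pathGraph_zero_last hn]
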